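/- If there exist an OMZD(m+1) and an OMZD(n+1), then there exists an OMZD(m+n). Specifically, if M = [[0, uᵀ],[v, B]] and N = [[0, xᵀ],[y, C]] are OMZDs of orders m+1 and n+1 scaled so that M·Mᵀ = I and N·Nᵀ = I, then the block matrix Q = [[B, v·xᵀ],[y·uᵀ, C]] satisfies Q·Qᵀ = I, has zero diagonal, and has all off-diagonal entries nonzero. -/

import Mathlib

open Matrix

/-- An OMZD over an arbitrary finite index type: `A * Aᵀ = c • I` for some `c > 0`,
zero diagonal, all off-diagonal entries nonzero. -/
def IsOMZD {ι : Type*} [Fintype ι] [DecidableEq ι] (A : Matrix ι ι ℝ) : Prop :=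
  (∃ c : ℝ, 0 < c ∧ A * Aᵀ = c • (1 : Matrix ι ι ℝ)) ∧
  (∀ i, A i i = 0) ∧ (∀ i j, i ≠ j → A i j ≠ 0)

/-!
Write `M = [[0, uᵀ], [v, B]]`. Comparing blocks, `M * Mᵀ = 1` says exactly that `u` is a unit
vector, `B u = 0` and `v vᵀ + B Bᵀ = 1`; likewise for `N`. In `Q * Qᵀ` the rank-one blocks then
contribute `v xᵀ x vᵀ = v vᵀ` and `y uᵀ u yᵀ = y yᵀ` to the diagonal blocks, completing `B Bᵀ` and
`C Cᵀ` to the identity, while the off-diagonal blocks `B u yᵀ + v xᵀ Cᵀ` and its transpose vanish.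
Every entry of `Q` is an entry of `B` or `C`, or a product of two border entries of `M` and `N`.
-/

section Border

variable {ι m R : Type*} [Unique ι] [Fintype m] [CommRing R]

theorem fromBlocks_border_mul_transpose (u v : m → R) (B : Matrix m m R) :
    fromBlocks (0 : Matrix ι ι R) (replicateRow ι u) (replicateCol ι v) B *
        (fromBlocks (0 : Matrix ι ι R) (replicateRow ι u) (replicateCol ι v) B)ᵀ =
      fromBlocks (of fun _ _ => u ⬝ᵥ u) (replicateRow ι (B *ᵥ u))
        (replicateCol ι (B *ᵥ u)) (vecMulVec v v + B * Bᵀ) := by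
  rw [fromBlocks_transpose, fromBlocks_multiply]
  congr 1 <;> ext <;> simp [mul_apply, mulVec, dotProduct, vecMulVec, mul_comm]

theorem fromBlocks_border_mul_transpose_eq_one_iff [DecidableEq ι] [DecidableEq m] {u v : m → R}
    {B : Matrix m m R} :
    fromBlocks (0 : Matrix ι ι R) (replicateRow ι u) (replicateCol ι v) B *
        (fromBlocks (0 : Matrix ι ι R) (replicateRow ι u) (replicateCol ι v) B)ᵀ = 1 ↔
      u ⬝ᵥ u = 1 ∧ B *ᵥ u = 0 ∧ vecMulVec v v + B * Bᵀ = 1 := by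
  have h_corner : (of fun (_ : ι) (_ : ι) => u ⬝ᵥ u) = 1 ↔ u ⬝ᵥ u = 1 := by
    simp [← Matrix.ext_iff, Unique.forall_iff]
  rw [fromBlocks_border_mul_transpose, ← fromBlocks_one, fromBlocks_inj, h_corner,
    replicateRow_eq_zero, replicateCol_eq_zero, and_self_left]

end Border

theorem border_ne_zero_of_offDiag_ne_zero {ι m R : Type*} [Inhabited ι] [Zero R]
    {u v : m → R} {B : Matrix m m R}
    (h : ∀ i j, i ≠ j →
      fromBlocks (0 : Matrix ι ι R) (replicateRow ι u) (replicateCol ι v) B i j ≠ 0) :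
    (∀ k, u k ≠ 0) ∧ (∀ k, v k ≠ 0) ∧ ∀ k l, k ≠ l → B k l ≠ 0 :=
  ⟨fun k => h (.inl default) (.inr k) Sum.inl_ne_inr,
    fun k => h (.inr k) (.inl default) Sum.inr_ne_inl,
    fun k l hkl => h (.inr k) (.inr l) (Sum.inr_injective.ne hkl)⟩

theorem fromBlocks_vecMulVec_mul_transpose_eq_one {m n R : Type*} [Fintype m] [Fintype n]
    [DecidableEq m] [DecidableEq n] [CommRing R]
    {u v : m → R} {x y : n → R} {B : Matrix m m R} {C : Matrix n n R}
    (hu : u ⬝ᵥ u = 1) (hBu : B *ᵥ u = 0) (hB : vecMulVec v v + B * Bᵀ = 1)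
    (hx : x ⬝ᵥ x = 1) (hCx : C *ᵥ x = 0) (hC : vecMulVec y y + C * Cᵀ = 1) :
    fromBlocks B (vecMulVec v x) (vecMulVec y u) C *
      (fromBlocks B (vecMulVec v x) (vecMulVec y u) C)ᵀ = 1 := by
  rw [fromBlocks_transpose, fromBlocks_multiply, ← fromBlocks_one]
  simp only [transpose_vecMulVec, mul_vecMulVec, vecMulVec_mul, vecMulVec_mulVec,
    vecMul_transpose, hu, hx, hBu, hCx, MulOpposite.op_one, one_smul, zero_vecMulVec, add_zero]
  rw [add_comm, hB, hC]
  congr <;> ext <;> simp [vecMulVec_apply]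

theorem fromBlocks_vecMulVec_ne_zero {m n R : Type*} [MulZeroClass R] [NoZeroDivisors R]
    {u v : m → R} {x y : n → R} {B : Matrix m m R} {C : Matrix n n R}
    (hu : ∀ k, u k ≠ 0) (hv : ∀ k, v k ≠ 0) (hB : ∀ k l, k ≠ l → B k l ≠ 0)
    (hx : ∀ k, x k ≠ 0) (hy : ∀ k, y k ≠ 0) (hC : ∀ k l, k ≠ l → C k l ≠ 0) :
    ∀ i j, i ≠ j → fromBlocks B (vecMulVec v x) (vecMulVec y u) C i j ≠ 0
  | .inl i, .inl j, hij => hB i j (Sum.inl_injective.ne_iff.mp hij)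
  | .inl i, .inr j, _ => mul_ne_zero (hv i) (hx j)
  | .inr i, .inl j, _ => mul_ne_zero (hy i) (hu j)
  | .inr i, .inr j, hij => hC i j (Sum.inr_injective.ne_iff.mp hij)

/-- If `M = [[0, uᵀ],[v, B]]` and `N = [[0, xᵀ],[y, C]]` are OMZDs of orders `m+1` and
`n+1` scaled so that `M * Mᵀ = 1` and `N * Nᵀ = 1`, then `Q = [[B, v xᵀ],[y uᵀ, C]]`
is an OMZD of order `m + n` with `Q * Qᵀ = 1`. -/
theorem omzd_adding (m n : ℕ) (u v : Fin m → ℝ) (x y : Fin n → ℝ)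
    (B : Matrix (Fin m) (Fin m) ℝ) (C : Matrix (Fin n) (Fin n) ℝ)
    (M : Matrix (Fin 1 ⊕ Fin m) (Fin 1 ⊕ Fin m) ℝ)
    (N : Matrix (Fin 1 ⊕ Fin n) (Fin 1 ⊕ Fin n) ℝ)
    (hM : M = Matrix.fromBlocks 0 (Matrix.of fun (_ : Fin 1) j => u j)
      (Matrix.of fun i (_ : Fin 1) => v i) B)
    (hN : N = Matrix.fromBlocks 0 (Matrix.of fun (_ : Fin 1) j => x j)
      (Matrix.of fun i (_ : Fin 1) => y i) C)
    (hMomzd : IsOMZD M) (hNomzd : IsOMZD N)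
    (hMorth : M * Mᵀ = 1) (hNorth : N * Nᵀ = 1) :
    let Q : Matrix (Fin m ⊕ Fin n) (Fin m ⊕ Fin n) ℝ :=
      Matrix.fromBlocks B (Matrix.vecMulVec v x) (Matrix.vecMulVec y u) C
    Q * Qᵀ = 1 ∧ (∀ i, Q i i = 0) ∧ (∀ i j, i ≠ j → Q i j ≠ 0) := by
  obtain ⟨-, hMdiag, hMoff⟩ := hMomzd
  obtain ⟨-, hNdiag, hNoff⟩ := hNomzd
  subst hM hN
  obtain ⟨hu, hBu, hB⟩ := fromBlocks_border_mul_transpose_eq_one_iff.mp hMorth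
  obtain ⟨hx, hCx, hC⟩ := fromBlocks_border_mul_transpose_eq_one_iff.mp hNorth
  obtain ⟨hu0, hv0, hBoff⟩ := border_ne_zero_of_offDiag_ne_zero hMoff
  obtain ⟨hx0, hy0, hCoff⟩ := border_ne_zero_of_offDiag_ne_zero hNoff
  refine ⟨fromBlocks_vecMulVec_mul_transpose_eq_one hu hBu hB hx hCx hC, ?_,
    fromBlocks_vecMulVec_ne_zero hu0 hv0 hBoff hx0 hy0 hCoff⟩
  rintro (i | i)
  exacts [hMdiag (.inr i), hNdiag (.inr i)]
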